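/- arXiv:2207.03653 — 3 statements merged into one kernel-verified Lean document; each statement's English description precedes it below -/
import Mathlib

section
/- Let n ≥ 2, k ≥ 1, R ∈ (-1,1), and let ψ be a real-valued differentiable function on an open subinterval of (-1,1) satisfying ψ'(r) = -(1/(k(1-r²)))(ψ(r)²+1)(√(1-r²)ψ(r)² - (n-1)(r-R)ψ(r) + √(1-r²)). If r ∈ (a,b) (where a,b are the roots of B(r) = ((n-1)²+4)r² - 2(n-1)²Rr + (n-1)²R² - 4), then ψ'(r) < 0. -/
noncomputable def Bq (n : ℕ) (R r : ℝ) : ℝ :=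
  (((n : ℝ) - 1) ^ 2 + 4) * r ^ 2 - 2 * ((n : ℝ) - 1) ^ 2 * R * r + ((n : ℝ) - 1) ^ 2 * R ^ 2 - 4

noncomputable def rootA (n : ℕ) (R : ℝ) : ℝ :=
  (((n : ℝ) - 1) ^ 2 * R - 2 * Real.sqrt (((n : ℝ) - 1) ^ 2 * (1 - R ^ 2) + 4)) / (((n : ℝ) - 1) ^ 2 + 4)

noncomputable def rootB (n : ℕ) (R : ℝ) : ℝ :=
  (((n : ℝ) - 1) ^ 2 * R + 2 * Real.sqrt (((n : ℝ) - 1) ^ 2 * (1 - R ^ 2) + 4)) / (((n : ℝ) - 1) ^ 2 + 4)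

noncomputable def Aq (n : ℕ) (R x r : ℝ) : ℝ :=
  Real.sqrt (1 - r ^ 2) * x ^ 2 - ((n : ℝ) - 1) * (r - R) * x + Real.sqrt (1 - r ^ 2)

noncomputable def eta1 (n : ℕ) (R r : ℝ) : ℝ :=
  (((n : ℝ) - 1) * (r - R) - Real.sqrt (Bq n R r)) / (2 * Real.sqrt (1 - r ^ 2))

noncomputable def eta2 (n : ℕ) (R r : ℝ) : ℝ :=
  (((n : ℝ) - 1) * (r - R) + Real.sqrt (Bq n R r)) / (2 * Real.sqrt (1 - r ^ 2))

noncomputable def Phi (n k : ℕ) (R r p : ℝ) : ℝ :=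
  -(1 / ((k : ℝ) * (1 - r ^ 2))) * (p ^ 2 + 1) *
    (Real.sqrt (1 - r ^ 2) * p ^ 2 - ((n : ℝ) - 1) * (r - R) * p + Real.sqrt (1 - r ^ 2))

set_option maxHeartbeats 1600000 in
theorem stmt_4 (n k : ℕ) (hn : 2 ≤ n) (hk : 1 ≤ k) (R : ℝ) (hR1 : -1 < R) (hR2 : R < 1)
    (x y : ℝ) (hx : -1 ≤ x) (hy : y ≤ 1) (ψ : ℝ → ℝ)
    (hode : ∀ r ∈ Set.Ioo x y, HasDerivAt ψ (Phi n k R r (ψ r)) r)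
    (r : ℝ) (hr : r ∈ Set.Ioo x y) (hra : rootA n R < r) (hrb : r < rootB n R) :
    deriv ψ r < 0 := by
  have hd := (hode r hr).deriv
  rw [hd]
  have hr1 : -1 < r := lt_of_le_of_lt hx hr.1
  have hr2 : r < 1 := lt_of_lt_of_le hr.2 hy
  have h1r2 : (0:ℝ) < 1 - r ^ 2 := by nlinarith
  have hspos : 0 < Real.sqrt (1 - r ^ 2) := Real.sqrt_pos.mpr h1r2
  have hssq : Real.sqrt (1 - r ^ 2) ^ 2 = 1 - r ^ 2 := Real.sq_sqrt h1r2.le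
  have hmpos : (0:ℝ) ≤ ((n : ℝ) - 1) ^ 2 := sq_nonneg _
  have hcpos : (0:ℝ) < ((n : ℝ) - 1) ^ 2 + 4 := by linarith
  have htnn : (0:ℝ) ≤ ((n : ℝ) - 1) ^ 2 * (1 - R ^ 2) + 4 := by
    nlinarith [mul_nonneg hmpos (by nlinarith : (0:ℝ) ≤ 1 - R ^ 2)]
  have htsq : Real.sqrt (((n : ℝ) - 1) ^ 2 * (1 - R ^ 2) + 4) ^ 2
      = ((n : ℝ) - 1) ^ 2 * (1 - R ^ 2) + 4 := Real.sq_sqrt htnn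
  have h1 : ((n : ℝ) - 1) ^ 2 * R - 2 * Real.sqrt (((n : ℝ) - 1) ^ 2 * (1 - R ^ 2) + 4)
      < (((n : ℝ) - 1) ^ 2 + 4) * r := by
    unfold rootA at hra
    rw [div_lt_iff₀ hcpos] at hra
    linarith [hra]
  have h2 : (((n : ℝ) - 1) ^ 2 + 4) * r
      < ((n : ℝ) - 1) ^ 2 * R + 2 * Real.sqrt (((n : ℝ) - 1) ^ 2 * (1 - R ^ 2) + 4) := by
    unfold rootB at hrb
    rw [lt_div_iff₀ hcpos] at hrb
    linarith [hrb]
  have e1 : 0 < 2 * Real.sqrt (((n : ℝ) - 1) ^ 2 * (1 - R ^ 2) + 4)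
      - ((((n : ℝ) - 1) ^ 2 + 4) * r - ((n : ℝ) - 1) ^ 2 * R) := by linarith
  have e2 : 0 < 2 * Real.sqrt (((n : ℝ) - 1) ^ 2 * (1 - R ^ 2) + 4)
      + ((((n : ℝ) - 1) ^ 2 + 4) * r - ((n : ℝ) - 1) ^ 2 * R) := by linarith
  have e3 := mul_pos e1 e2
  have hB : ((n : ℝ) - 1) ^ 2 * (r - R) ^ 2 - 4 * (1 - r ^ 2) < 0 := by
    nlinarith [e3, htsq, hcpos]
  have h4 : 4 * Real.sqrt (1 - r ^ 2) * (Real.sqrt (1 - r ^ 2) * (ψ r) ^ 2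
      - ((n : ℝ) - 1) * (r - R) * (ψ r) + Real.sqrt (1 - r ^ 2))
      = (2 * Real.sqrt (1 - r ^ 2) * (ψ r) - ((n : ℝ) - 1) * (r - R)) ^ 2
      - (((n : ℝ) - 1) ^ 2 * (r - R) ^ 2 - 4 * (1 - r ^ 2)) := by
    linear_combination (4 : ℝ) * hssq
  have h5 : 0 < 4 * Real.sqrt (1 - r ^ 2) * (Real.sqrt (1 - r ^ 2) * (ψ r) ^ 2
      - ((n : ℝ) - 1) * (r - R) * (ψ r) + Real.sqrt (1 - r ^ 2)) := by
    rw [h4]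
    nlinarith [sq_nonneg (2 * Real.sqrt (1 - r ^ 2) * (ψ r) - ((n : ℝ) - 1) * (r - R)), hB]
  have hA : 0 < Real.sqrt (1 - r ^ 2) * (ψ r) ^ 2
      - ((n : ℝ) - 1) * (r - R) * (ψ r) + Real.sqrt (1 - r ^ 2) := by
    nlinarith [h5, hspos]
  have hkpos : (0:ℝ) < (k : ℝ) := by exact_mod_cast hk
  have hcoef : 0 < 1 / ((k : ℝ) * (1 - r ^ 2)) := by positivity
  have hpsq : 0 < (ψ r) ^ 2 + 1 := by positivity
  have hprod := mul_pos (mul_pos hcoef hpsq) hA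
  unfold Phi
  have heq : -(1 / ((k : ℝ) * (1 - r ^ 2))) * ((ψ r) ^ 2 + 1) *
      (Real.sqrt (1 - r ^ 2) * (ψ r) ^ 2 - ((n : ℝ) - 1) * (r - R) * (ψ r)
        + Real.sqrt (1 - r ^ 2))
      = -(1 / ((k : ℝ) * (1 - r ^ 2)) * ((ψ r) ^ 2 + 1) *
      (Real.sqrt (1 - r ^ 2) * (ψ r) ^ 2 - ((n : ℝ) - 1) * (r - R) * (ψ r)
        + Real.sqrt (1 - r ^ 2))) := by ring
  rw [heq]
  exact neg_lt_zero.mpr hprod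
end

section
/- Let n ≥ 2, k ≥ 1, R ∈ (-1,1), and let ψ be differentiable on an open subinterval of (-1,1) satisfying ψ'(r) = -(1/(k(1-r²)))(ψ(r)²+1)(√(1-r²)ψ(r)² - (n-1)(r-R)ψ(r) + √(1-r²)). For r ∈ (-1,a] ∪ [b,1): (i) if η₁(r) < ψ(r) < η₂(r) then ψ'(r) > 0; (ii) if ψ(r) = η₁(r) or ψ(r) = η₂(r) then ψ'(r) = 0; (iii) if ψ(r) < η₁(r) or ψ(r) > η₂(r) then ψ'(r) < 0. -/
/-!
Up to the positive factor `(ψ² + 1) / (k (1 - r²))`, `ψ'` is `-A(ψ)`, where the quadratic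
`A(p) = √(1-r²) p² - (n-1)(r-R) p + √(1-r²)` has discriminant `B(r)` and hence roots `η₁ ≤ η₂`
wherever `B(r) ≥ 0`. Completing the square, `(m+4) B(r) = ((m+4) r - m R)² - 4 D` with
`m = (n-1)²` and `D = m (1 - R²) + 4`, so `B ≥ 0` outside `(a, b)`.
The sign of `ψ'` is then the sign of `-(ψ - η₁)(ψ - η₂)`.
-/

theorem sub_mul_sub_sign {a b p : ℝ} (hab : a ≤ b) :
    (a < p ∧ p < b → (p - a) * (p - b) < 0) ∧
    (p = a ∨ p = b → (p - a) * (p - b) = 0) ∧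
    (p < a ∨ b < p → 0 < (p - a) * (p - b)) := by
  refine ⟨fun ⟨ha, hb⟩ => mul_neg_of_pos_of_neg (by linarith) (by linarith), ?_, ?_⟩
  · rintro (rfl | rfl) <;> ring
  · rintro (ha | hb)
    · exact mul_pos_of_neg_of_neg (by linarith) (by linarith)
    · exact mul_pos (by linarith) (by linarith)

section Discriminant

variable (n : ℕ) (R : ℝ)

theorem mul_Bq_eq (r : ℝ) :
    (((n : ℝ) - 1) ^ 2 + 4) * Bq n R r =
      ((((n : ℝ) - 1) ^ 2 + 4) * r - ((n : ℝ) - 1) ^ 2 * R) ^ 2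
        - 4 * (((n : ℝ) - 1) ^ 2 * (1 - R ^ 2) + 4) := by
  unfold Bq
  ring

theorem Bq_nonneg {r : ℝ} (hr : r ≤ rootA n R ∨ rootB n R ≤ r) : 0 ≤ Bq n R r := by
  set m : ℝ := ((n : ℝ) - 1) ^ 2
  set D : ℝ := m * (1 - R ^ 2) + 4
  have hm : 0 < m + 4 := by positivity
  have hs : 0 ≤ Real.sqrt D := Real.sqrt_nonneg D
  -- no sign condition on `D` is needed: `√D ^ 2 = max D 0`
  have hD : D ≤ Real.sqrt D ^ 2 := Real.sq_sqrt' ▸ le_max_left D 0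
  have hsq : 4 * D ≤ ((m + 4) * r - m * R) ^ 2 := by
    rcases hr with hr | hr
    · have : (m + 4) * r - m * R ≤ -(2 * Real.sqrt D) := by
        rw [rootA, le_div_iff₀ hm] at hr
        linarith
      nlinarith
    · have : 2 * Real.sqrt D ≤ (m + 4) * r - m * R := by
        rw [rootB, div_le_iff₀ hm] at hr
        linarith
      nlinarith
  have := mul_Bq_eq n R r
  nlinarith

theorem eta1_le_eta2 (r : ℝ) : eta1 n R r ≤ eta2 n R r :=
  div_le_div_of_nonneg_right (by linarith [Real.sqrt_nonneg (Bq n R r)]) (by positivity)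

theorem Aq_eq_mul {r : ℝ} (hr : 0 < 1 - r ^ 2) (hB : 0 ≤ Bq n R r) (p : ℝ) :
    Aq n R p r = Real.sqrt (1 - r ^ 2) * ((p - eta1 n R r) * (p - eta2 n R r)) := by
  have hs2 : Real.sqrt (1 - r ^ 2) ^ 2 = 1 - r ^ 2 := Real.sq_sqrt hr.le
  have hq2 : Real.sqrt (Bq n R r) ^ 2 = Bq n R r := Real.sq_sqrt hB
  unfold Aq eta1 eta2
  set q := Real.sqrt (Bq n R r)
  field_simp
  unfold Bq at hq2
  linear_combination hq2 + 4 * hs2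

end Discriminant

theorem Phi_eq_neg_mul_Aq (n k : ℕ) (R r p : ℝ) :
    Phi n k R r p = -((p ^ 2 + 1) / ((k : ℝ) * (1 - r ^ 2))) * Aq n R p r := by
  unfold Phi Aq
  ring

theorem stmt_5_general (n k : ℕ) (hk : 1 ≤ k) (R : ℝ)
    (x y : ℝ) (hx : -1 ≤ x) (hy : y ≤ 1) (ψ : ℝ → ℝ)
    (hode : ∀ r ∈ Set.Ioo x y, HasDerivAt ψ (Phi n k R r (ψ r)) r)
    (r : ℝ) (hr : r ∈ Set.Ioo x y)
    (hmem : r ∈ Set.Ioc (-1 : ℝ) (rootA n R) ∪ Set.Ico (rootB n R) 1) :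
    (eta1 n R r < ψ r ∧ ψ r < eta2 n R r → 0 < deriv ψ r) ∧
    (ψ r = eta1 n R r ∨ ψ r = eta2 n R r → deriv ψ r = 0) ∧
    (ψ r < eta1 n R r ∨ eta2 n R r < ψ r → deriv ψ r < 0) := by
  have h1r : 0 < 1 - r ^ 2 := by nlinarith [hr.1, hr.2]
  have hB : 0 ≤ Bq n R r := Bq_nonneg n R (hmem.imp (·.2) (·.1))
  set κ := (ψ r ^ 2 + 1) / ((k : ℝ) * (1 - r ^ 2)) * Real.sqrt (1 - r ^ 2)
  have hκ : 0 < κ := by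
    have : (0 : ℝ) < k := by exact_mod_cast hk
    have := Real.sqrt_pos.mpr h1r
    positivity
  have hderiv : deriv ψ r = -κ * ((ψ r - eta1 n R r) * (ψ r - eta2 n R r)) := by
    rw [(hode r hr).deriv, Phi_eq_neg_mul_Aq, Aq_eq_mul n R h1r hB]
    ring
  obtain ⟨hin, hroot, hout⟩ := sub_mul_sub_sign (p := ψ r) (eta1_le_eta2 n R r)
  rw [hderiv]
  exact ⟨fun h => by nlinarith [hin h], fun h => by rw [hroot h, mul_zero],
    fun h => by nlinarith [hout h]⟩

theorem stmt_5 (n k : ℕ) (hn : 2 ≤ n) (hk : 1 ≤ k) (R : ℝ) (hR1 : -1 < R) (hR2 : R < 1)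
    (x y : ℝ) (hx : -1 ≤ x) (hy : y ≤ 1) (ψ : ℝ → ℝ)
    (hode : ∀ r ∈ Set.Ioo x y, HasDerivAt ψ (Phi n k R r (ψ r)) r)
    (r : ℝ) (hr : r ∈ Set.Ioo x y)
    (hmem : r ∈ Set.Ioc (-1 : ℝ) (rootA n R) ∪ Set.Ico (rootB n R) 1) :
    (eta1 n R r < ψ r ∧ ψ r < eta2 n R r → 0 < deriv ψ r) ∧
    (ψ r = eta1 n R r ∨ ψ r = eta2 n R r → deriv ψ r = 0) ∧
    (ψ r < eta1 n R r ∨ eta2 n R r < ψ r → deriv ψ r < 0) :=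
  stmt_5_general n k hk R x y hx hy ψ hode r hr hmem
end

section
/- Let n ≥ 2, k ≥ 1, R ∈ (-1,1), and let ψ be a solution on (r₀,1) of ψ'(r) = -(1/(k(1-r²)))(ψ(r)²+1)(√(1-r²)ψ(r)² - (n-1)(r-R)ψ(r) + √(1-r²)) with r₀ ∈ (b,1) and η₁(r₀) < ψ(r₀) < η₂(r₀), where b is the larger root of B(r) = ((n-1)²+4)r² - 2(n-1)²Rr + (n-1)²R² - 4. Then ψ(r) → +∞ as r ↑ 1; in particular ψ is not bounded above on (r₀,1). -/
open Set Filter Topology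

lemma lt_rootB {n : ℕ} {R : ℝ} (hR : R < 1) : R < rootB n R := by
  have ha : 0 < ((n : ℝ) - 1) ^ 2 + 4 := by positivity
  have hD : 2 * R < √(((n : ℝ) - 1) ^ 2 * (1 - R ^ 2) + 4) := by
    rcases lt_or_ge R 0 with hR0 | hR0
    · linarith [Real.sqrt_nonneg (((n : ℝ) - 1) ^ 2 * (1 - R ^ 2) + 4)]
    · rw [Real.lt_sqrt (by linarith)]
      nlinarith [mul_pos ha (show 0 < 1 - R ^ 2 by nlinarith)]
  rw [rootB, lt_div_iff₀ ha]
  linarith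

-- If either square root vanished (possibly as the junk value `√x = 0` for `x < 0`, then
-- followed by a division by zero), the two roots would coincide.
lemma pos_of_eta1_lt_eta2 {n : ℕ} {R r : ℝ} (h : eta1 n R r < eta2 n R r) :
    0 < 1 - r ^ 2 ∧ 0 < Bq n R r := by
  have hS : √(1 - r ^ 2) ≠ 0 := fun h0 ↦ by simp [eta1, eta2, h0] at h
  have hB : √(Bq n R r) ≠ 0 := fun h0 ↦ by simp [eta1, eta2, h0] at h
  exact ⟨Real.sqrt_pos.1 ((Real.sqrt_nonneg _).lt_of_ne' hS),
    Real.sqrt_pos.1 ((Real.sqrt_nonneg _).lt_of_ne' hB)⟩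

lemma Aq_eq_sqrt_mul_sub_eta1_mul_sub_eta2 {n : ℕ} {R r : ℝ} (hr : 0 < 1 - r ^ 2)
    (hB : 0 ≤ Bq n R r) (x : ℝ) :
    Aq n R x r = √(1 - r ^ 2) * (x - eta1 n R r) * (x - eta2 n R r) := by
  rw [Aq, eta1, eta2]
  field_simp
  linear_combination (norm := skip) Real.sq_sqrt hB + 4 * Real.sq_sqrt hr.le
  simp only [Bq]
  ring

lemma Aq_neg_of_eta1_lt_of_lt_eta2 {n : ℕ} {R r x : ℝ} (h₁ : eta1 n R r < x)
    (h₂ : x < eta2 n R r) : Aq n R x r < 0 := by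
  obtain ⟨hr, hB⟩ := pos_of_eta1_lt_eta2 (h₁.trans h₂)
  rw [Aq_eq_sqrt_mul_sub_eta1_mul_sub_eta2 hr hB.le]
  exact mul_neg_of_pos_of_neg (mul_pos (Real.sqrt_pos.2 hr) (sub_pos.2 h₁)) (sub_neg.2 h₂)

lemma pos_of_Aq_nonpos {n : ℕ} {R r x : ℝ} (hn : 0 < (n : ℝ) - 1) (hr : 0 < 1 - r ^ 2)
    (hRr : R < r) (hA : Aq n R x r ≤ 0) : 0 < x := by
  have hS := Real.sqrt_pos.2 hr
  by_contra! hx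
  have : 0 ≤ ((n : ℝ) - 1) * (r - R) * -x :=
    mul_nonneg (mul_nonneg (by linarith) (by linarith)) (by linarith)
  rw [Aq] at hA
  nlinarith [mul_pos hS (show 0 < x ^ 2 + 1 by positivity)]

lemma Phi_eq (n k : ℕ) (R r p : ℝ) :
    Phi n k R r p = (p ^ 2 + 1) * -Aq n R p r / (k * (1 - r ^ 2)) := by
  simp only [Phi, Aq]
  ring

lemma Phi_nonneg_of_Aq_nonpos {n k : ℕ} {R r p : ℝ} (hr : 0 ≤ 1 - r ^ 2)
    (hA : Aq n R p r ≤ 0) : 0 ≤ Phi n k R r p := by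
  rw [Phi_eq]
  have : 0 ≤ -Aq n R p r := by linarith
  positivity

lemma div_one_sub_le_Phi {n k : ℕ} {R r p c : ℝ} (hk : 1 ≤ k) (hr₀ : 0 ≤ r) (hr₁ : r < 1)
    (hc : 0 ≤ c) (hA : c ≤ -Aq n R p r) : c / (2 * k) / (1 - r) ≤ Phi n k R r p := by
  have hk' : (0 : ℝ) < k := by exact_mod_cast hk
  have hr : 0 < 1 - r ^ 2 := by nlinarith
  rw [Phi_eq, div_div]
  calc c / (2 * k * (1 - r)) ≤ c / (k * (1 - r ^ 2)) :=
        div_le_div_of_nonneg_left hc (by positivity)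
          (by nlinarith [mul_nonneg hk'.le (sq_nonneg (1 - r))])
    _ ≤ (p ^ 2 + 1) * -Aq n R p r / (k * (1 - r ^ 2)) := by
        gcongr
        nlinarith [sq_nonneg p]

lemma hasDerivAt_Aq_comp {n : ℕ} {R r ψ' : ℝ} {ψ : ℝ → ℝ} (hψ : HasDerivAt ψ ψ' r)
    (hr : 0 < 1 - r ^ 2) :
    HasDerivAt (fun t ↦ Aq n R (ψ t) t)
      (-r / √(1 - r ^ 2) * (ψ r ^ 2 + 1) - (n - 1) * ψ r
        + (2 * √(1 - r ^ 2) * ψ r - (n - 1) * (r - R)) * ψ') r := by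
  have hsqrt : HasDerivAt (fun t : ℝ ↦ √(1 - t ^ 2)) (-(2 * r) / (2 * √(1 - r ^ 2))) r := by
    simpa using ((hasDerivAt_pow 2 r).const_sub 1).sqrt hr.ne'
  have hlin : HasDerivAt (fun t : ℝ ↦ ((n : ℝ) - 1) * (t - R)) ((n : ℝ) - 1) r := by
    simpa using ((hasDerivAt_id r).sub_const R).const_mul ((n : ℝ) - 1)
  refine (((hsqrt.mul (hψ.pow 2)).sub (hlin.mul hψ)).add hsqrt).congr_deriv ?_
  simp only [Pi.pow_apply]
  field_simp
  ring

lemma Aq_deriv_r_neg_of_Aq_eq_zero {n : ℕ} {R r x : ℝ} (hR : -1 < R) (hRr : R < r) (hr : r < 1)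
    (hA : Aq n R x r = 0) : -r / √(1 - r ^ 2) * (x ^ 2 + 1) - (n - 1) * x < 0 := by
  have h1r : 0 < 1 - r ^ 2 := by nlinarith
  have hSq := Real.sq_sqrt h1r.le
  rw [Aq] at hA
  set s := √(1 - r ^ 2)
  have hS : 0 < s := Real.sqrt_pos.2 h1r
  have hnx : 0 < ((n : ℝ) - 1) * x := by
    have : 0 < ((n : ℝ) - 1) * x * (r - R) := by
      nlinarith [mul_pos hS (show 0 < x ^ 2 + 1 by positivity)]
    exact pos_of_mul_pos_left this (by linarith)
  have key : (-r / s * (x ^ 2 + 1) - (n - 1) * x) * s ^ 2 = ((n : ℝ) - 1) * x * (r * R - 1) := by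
    field_simp
    linear_combination (-r) * hA - ((n : ℝ) - 1) * x * hSq
  have hrR : r * R < 1 := by nlinarith
  have : ((n : ℝ) - 1) * x * (r * R - 1) < 0 := mul_neg_of_pos_of_neg hnx (by linarith)
  rw [← key] at this
  exact neg_of_mul_neg_left this (sq_nonneg s)

lemma nonpos_of_hasDerivAt_neg_of_eq_zero {f f' : ℝ → ℝ} {a b : ℝ}
    (hf : ∀ x ∈ Ico a b, HasDerivAt f (f' x) x) (ha : f a ≤ 0)
    (hzero : ∀ x ∈ Ico a b, f x = 0 → f' x < 0) : ∀ x ∈ Ico a b, f x ≤ 0 := by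
  intro x hx
  have hsub : Icc a x ⊆ Ico a b := Icc_subset_Ico_right hx.2
  refine image_le_of_deriv_right_lt_deriv_boundary' (f' := f') (B := fun _ ↦ 0) (B' := fun _ ↦ 0)
    (fun y hy ↦ (hf y (hsub hy)).continuousAt.continuousWithinAt)
    (fun y hy ↦ (hf y (hsub (Ico_subset_Icc_self hy))).hasDerivWithinAt) ha continuousOn_const
    (fun y _ ↦ hasDerivWithinAt_const _ _ _)
    (fun y hy ↦ hzero y (hsub (Ico_subset_Icc_self hy))) ⟨hx.1, le_rfl⟩

section Solution

variable {n k : ℕ} {R r₀ : ℝ} {ψ : ℝ → ℝ}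

lemma one_sub_sq_pos_of_mem_Ico (hR : -1 < R) (hRr₀ : R < r₀) {r : ℝ} (hr : r ∈ Ico r₀ 1) :
    0 < 1 - r ^ 2 := by
  nlinarith [hr.1, hr.2]

lemma Aq_nonpos_of_solution (hR : -1 < R) (hRr₀ : R < r₀)
    (hode : ∀ r ∈ Ico r₀ 1, HasDerivAt ψ (Phi n k R r (ψ r)) r) (h₀ : Aq n R (ψ r₀) r₀ ≤ 0) :
    ∀ r ∈ Ico r₀ 1, Aq n R (ψ r) r ≤ 0 := by
  refine nonpos_of_hasDerivAt_neg_of_eq_zero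
    (fun r hr ↦ hasDerivAt_Aq_comp (hode r hr) (one_sub_sq_pos_of_mem_Ico hR hRr₀ hr)) h₀ ?_
  intro r hr hA
  have hPhi : Phi n k R r (ψ r) = 0 := by simp [Phi_eq, hA]
  rw [hPhi, mul_zero, add_zero]
  exact Aq_deriv_r_neg_of_Aq_eq_zero hR (hRr₀.trans_le hr.1) hr.2 hA

lemma monotoneOn_of_solution (hR : -1 < R) (hRr₀ : R < r₀)
    (hode : ∀ r ∈ Ico r₀ 1, HasDerivAt ψ (Phi n k R r (ψ r)) r) (h₀ : Aq n R (ψ r₀) r₀ ≤ 0) :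
    MonotoneOn ψ (Ico r₀ 1) := by
  have hA := Aq_nonpos_of_solution hR hRr₀ hode h₀
  refine monotoneOn_of_hasDerivWithinAt_nonneg (convex_Ico r₀ 1)
    (fun r hr ↦ (hode r hr).continuousAt.continuousWithinAt)
    (fun r hr ↦ (hode r (interior_subset hr)).hasDerivWithinAt) fun r hr ↦ ?_
  have hr := interior_subset hr
  exact Phi_nonneg_of_Aq_nonpos (one_sub_sq_pos_of_mem_Ico hR hRr₀ hr).le (hA r hr)

end Solution

lemma tendsto_nhdsLT_atTop_of_div_one_sub_le_deriv {ψ ψ' : ℝ → ℝ} {C : ℝ} (hC : 0 < C)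
    (hψ : ∀ᶠ r in 𝓝[<] 1, HasDerivAt ψ (ψ' r) r ∧ C / (1 - r) ≤ ψ' r) :
    Tendsto ψ (𝓝[<] 1) atTop := by
  obtain ⟨a, ha, hsub⟩ := mem_nhdsLT_iff_exists_Ioo_subset.1 hψ
  have hlog : ∀ r ∈ Ioo a 1, HasDerivAt (fun t ↦ ψ t + C * Real.log (1 - t))
      (ψ' r - C / (1 - r)) r := fun r hr ↦
    ((hsub hr).1.add ((((hasDerivAt_id r).const_sub 1).log (sub_pos.2 hr.2).ne').const_mul C)
      ).congr_deriv (by simp only [id_eq]; ring)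
  have hmono : MonotoneOn (fun t ↦ ψ t + C * Real.log (1 - t)) (Ioo a 1) :=
    monotoneOn_of_hasDerivWithinAt_nonneg (convex_Ioo a 1)
      (fun r hr ↦ (hlog r hr).continuousAt.continuousWithinAt)
      (fun r hr ↦ (hlog r (interior_subset hr)).hasDerivWithinAt)
      fun r hr ↦ sub_nonneg.2 (hsub (interior_subset hr)).2
  obtain ⟨b, hb⟩ : (Ioo a 1).Nonempty := nonempty_Ioo.2 ha
  have h1 : Tendsto (fun t : ℝ ↦ 1 - t) (𝓝[<] 1) (𝓝[>] 0) := by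
    refine tendsto_nhdsWithin_iff.2 ⟨?_, eventually_nhdsWithin_of_forall fun t ht ↦ ?_⟩
    · exact ((continuous_const.sub continuous_id).tendsto' 1 0 (sub_self 1)).mono_left
        nhdsWithin_le_nhds
    · exact sub_pos.2 (mem_Iio.1 ht)
  have hlower : Tendsto (fun t ↦ ψ b + C * Real.log (1 - b) + -(C * Real.log (1 - t)))
      (𝓝[<] 1) atTop :=
    tendsto_atTop_add_const_left _ _ <| tendsto_neg_atBot_atTop.comp <|
      (Real.tendsto_log_nhdsGT_zero.comp h1).const_mul_atBot hC
  refine tendsto_atTop_mono' _ ?_ hlower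
  filter_upwards [Ioo_mem_nhdsLT hb.2] with t ht
  have : ψ b + C * Real.log (1 - b) ≤ ψ t + C * Real.log (1 - t) :=
    hmono hb ⟨hb.1.trans ht.1, ht.2⟩ ht.1.le
  linarith

lemma tendsto_nhdsLT_atTop_of_monotoneOn {f : ℝ → ℝ} {a b : ℝ} (hf : MonotoneOn f (Ioo a b))
    (hf' : ¬BddAbove (f '' Ioo a b)) : Tendsto f (𝓝[<] b) atTop := by
  refine tendsto_atTop.2 fun M ↦ ?_
  obtain ⟨_, ⟨y, hy, rfl⟩, hMy⟩ := not_bddAbove_iff.1 hf' M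
  filter_upwards [Ioo_mem_nhdsLT hy.2] with t ht
  exact hMy.le.trans (hf hy ⟨hy.1.trans ht.1, ht.2⟩ ht.1.le)

lemma not_bddAbove_of_solution {n k : ℕ} {R r₀ : ℝ} {ψ : ℝ → ℝ} (hn : 0 < (n : ℝ) - 1)
    (hk : 1 ≤ k) (hRr₀ : R < r₀) (hr₀ : r₀ < 1) (hψ₀ : 0 < ψ r₀)
    (hmono : MonotoneOn ψ (Ico r₀ 1))
    (hode : ∀ r ∈ Ico r₀ 1, HasDerivAt ψ (Phi n k R r (ψ r)) r) :
    ¬BddAbove (ψ '' Ioo r₀ 1) := by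
  rintro ⟨M, hM⟩
  have hk' : (0 : ℝ) < k := by exact_mod_cast hk
  set c := ((n : ℝ) - 1) * (r₀ - R) * ψ r₀
  have hc : 0 < c := mul_pos (mul_pos (by linarith) (by linarith)) hψ₀
  have hsmall : ∀ᶠ r in 𝓝[<] 1, √(1 - r ^ 2) * (M ^ 2 + 1) ≤ c / 2 := by
    have : Tendsto (fun r : ℝ ↦ √(1 - r ^ 2) * (M ^ 2 + 1)) (𝓝 1) (𝓝 0) :=
      ((continuous_const.sub (continuous_pow 2)).sqrt.mul continuous_const).tendsto' 1 0
        (by simp)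
    exact nhdsWithin_le_nhds (this.eventually (ge_mem_nhds (half_pos hc)))
  have hderiv : ∀ᶠ r in 𝓝[<] 1,
      HasDerivAt ψ (Phi n k R r (ψ r)) r ∧ c / 2 / (2 * k) / (1 - r) ≤ Phi n k R r (ψ r) := by
    filter_upwards [hsmall, Ioo_mem_nhdsLT (max_lt hr₀ zero_lt_one)] with r hs hr
    have hr₀r : r₀ < r := (le_max_left _ _).trans_lt hr.1
    have hψr : ψ r₀ ≤ ψ r := hmono ⟨le_rfl, hr₀⟩ ⟨hr₀r.le, hr.2⟩ hr₀r.le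
    have hψM : ψ r ≤ M := hM ⟨r, ⟨hr₀r, hr.2⟩, rfl⟩
    refine ⟨hode r ⟨hr₀r.le, hr.2⟩, div_one_sub_le_Phi hk ((le_max_right _ _).trans hr.1.le) hr.2
      (by positivity) ?_⟩
    have hlin : c ≤ ((n : ℝ) - 1) * (r - R) * ψ r :=
      mul_le_mul (by nlinarith) hψr hψ₀.le (by nlinarith)
    have hquad : √(1 - r ^ 2) * (ψ r ^ 2 + 1) ≤ √(1 - r ^ 2) * (M ^ 2 + 1) := by
      gcongr
      exact hψ₀.le.trans hψr
    rw [Aq]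
    linarith
  obtain ⟨r, hMr, hr⟩ := ((tendsto_nhdsLT_atTop_of_div_one_sub_le_deriv (by positivity)
    hderiv).eventually_gt_atTop M |>.and (Ioo_mem_nhdsLT hr₀)).exists
  exact (hM ⟨r, hr, rfl⟩).not_gt hMr

theorem stmt_7 (n k : ℕ) (hn : 2 ≤ n) (hk : 1 ≤ k) (R : ℝ) (hR1 : -1 < R) (hR2 : R < 1)
    (r₀ : ℝ) (hr₀ : r₀ ∈ Set.Ioo (rootB n R) 1) (ψ : ℝ → ℝ)
    (hode : ∀ r ∈ Set.Ico r₀ (1 : ℝ), HasDerivAt ψ (Phi n k R r (ψ r)) r)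
    (h1 : eta1 n R r₀ < ψ r₀) (h2 : ψ r₀ < eta2 n R r₀) :
    Filter.Tendsto ψ (nhdsWithin 1 (Set.Iio 1)) Filter.atTop ∧
      ¬ BddAbove (ψ '' Set.Ioo r₀ 1) := by
  have hn1 : 0 < (n : ℝ) - 1 := sub_pos.2 (Nat.one_lt_cast.2 hn)
  have hRr₀ : R < r₀ := (lt_rootB hR2).trans hr₀.1
  have hA₀ : Aq n R (ψ r₀) r₀ < 0 := Aq_neg_of_eta1_lt_of_lt_eta2 h1 h2
  have hψ₀ : 0 < ψ r₀ :=
    pos_of_Aq_nonpos hn1 (pos_of_eta1_lt_eta2 (h1.trans h2)).1 hRr₀ hA₀.le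
  have hmono := monotoneOn_of_solution hR1 hRr₀ hode hA₀.le
  have hunbdd := not_bddAbove_of_solution hn1 hk hRr₀ hr₀.2 hψ₀ hmono hode
  exact ⟨tendsto_nhdsLT_atTop_of_monotoneOn (hmono.mono Ioo_subset_Ico_self) hunbdd, hunbdd⟩
end
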